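/- Let d ≥ 27 be even and let P = (1/2)(1 − F) be the antisymmetric projector on ℂ^d ⊗ ℂ^d. Then for every separable density matrix σ on ℂ^d ⊗ ℂ^d with t = Re Tr(P·σ) > 0, one has −log t > 2 · log((d+2)/d); and for every odd d ≥ 27 and every such σ, −log t > log((d+3)/(d−1)). In words: the 0-relative entropy of the totally antisymmetric state relative to any separable state strictly exceeds the quantum conditional mutual information I(A:B|C)_{ρ} of the state ρ_{ABC} = P_k/d_k (k = ⌈(d+1)/2⌉) once d ≥ 27. -/

import Mathlib

open Matrix Kronecker ComplexOrder

/-- The swap matrix on `ℂ^d ⊗ ℂ^d`, with entries `F[(i,j),(k,l)] = δ_{il}·δ_{jk}`. -/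
noncomputable def swapMat (d : ℕ) : Matrix (Fin d × Fin d) (Fin d × Fin d) ℂ :=
  fun p q => (if p.1 = q.2 then 1 else 0) * (if p.2 = q.1 then 1 else 0)

/-- The projector onto the antisymmetric subspace of `ℂ^d ⊗ ℂ^d`: `P = (1/2)(1 - F)`. -/
noncomputable def antiProj (d : ℕ) : Matrix (Fin d × Fin d) (Fin d × Fin d) ℂ :=
  (1 / 2 : ℂ) • ((1 : Matrix (Fin d × Fin d) (Fin d × Fin d) ℂ) - swapMat d)

/-- A density matrix: positive semidefinite with trace 1. -/
def IsDensityMatrix {ι : Type} [Fintype ι] [DecidableEq ι] (ρ : Matrix ι ι ℂ) : Prop :=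
  ρ.PosSemidef ∧ ρ.trace = 1

/-- A separable state on a bipartite system `ι ⊗ ι`: a finite convex combination of
Kronecker products of density matrices. -/
def IsSeparableState {ι : Type} [Fintype ι] [DecidableEq ι]
    (σ : Matrix (ι × ι) (ι × ι) ℂ) : Prop :=
  ∃ (m : ℕ) (p : Fin m → ℝ) (ρ τ : Fin m → Matrix ι ι ℂ),
    (∀ j, 0 ≤ p j) ∧ (∑ j, p j = 1) ∧
    (∀ j, IsDensityMatrix (ρ j)) ∧ (∀ j, IsDensityMatrix (τ j)) ∧
    σ = ∑ j, (p j : ℂ) • (ρ j ⊗ₖ τ j)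

/-!
Since `Tr(F (ρ ⊗ τ)) = Tr(ρ τ) ≥ 0` for positive `ρ, τ`, every separable state has
nonnegative swap overlap, so its overlap with `P = (1 - F)/2` is at most `1/2`. Hence the
0-relative entropy is at least `log 2`, which already exceeds both values of the conditional
mutual information as soon as `d > 5`.
-/

open scoped MatrixOrder in
theorem Matrix.PosSemidef.trace_mul_nonneg {𝕜 n : Type*} [RCLike 𝕜] [Fintype n]
    {A B : Matrix n n 𝕜} (hA : A.PosSemidef) (hB : B.PosSemidef) : 0 ≤ (A * B).trace := by
  classical
  obtain ⟨X, rfl⟩ := CStarAlgebra.nonneg_iff_eq_star_mul_self.mp hA.nonneg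
  rw [star_eq_conjTranspose, Matrix.mul_assoc, Matrix.trace_mul_comm]
  exact (hB.mul_mul_conjTranspose_same X).trace_nonneg

theorem trace_swapMat_mul_kronecker {d : ℕ} (ρ τ : Matrix (Fin d) (Fin d) ℂ) :
    (swapMat d * (ρ ⊗ₖ τ)).trace = (ρ * τ).trace := by
  simp only [Matrix.trace, Matrix.diag, Matrix.mul_apply, swapMat,
    Matrix.kroneckerMap_apply, ite_mul, one_mul, zero_mul, Fintype.sum_prod_type]
  rw [Finset.sum_comm]
  simp

theorem IsSeparableState.trace_swapMat_mul_nonneg {d : ℕ}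
    {σ : Matrix (Fin d × Fin d) (Fin d × Fin d) ℂ} (hσ : IsSeparableState σ) :
    0 ≤ (swapMat d * σ).trace := by
  obtain ⟨m, p, ρ, τ, hp, -, hρ, hτ, rfl⟩ := hσ
  simp only [Finset.mul_sum, mul_smul_comm, trace_sum, trace_smul, trace_swapMat_mul_kronecker]
  exact Finset.sum_nonneg fun j _ =>
    smul_nonneg (Complex.zero_le_real.mpr (hp j)) ((hρ j).1.trace_mul_nonneg (hτ j).1)

theorem trace_antiProj_mul (d : ℕ) (σ : Matrix (Fin d × Fin d) (Fin d × Fin d) ℂ) :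
    (antiProj d * σ).trace = (σ.trace - (swapMat d * σ).trace) / 2 := by
  rw [antiProj, Matrix.smul_mul, Matrix.sub_mul, Matrix.one_mul, trace_smul, trace_sub,
    smul_eq_mul]
  ring

theorem IsSeparableState.re_trace_antiProj_mul_le_half {d : ℕ}
    {σ : Matrix (Fin d × Fin d) (Fin d × Fin d) ℂ} (hσ : IsDensityMatrix σ)
    (hsep : IsSeparableState σ) : ((antiProj d * σ).trace).re ≤ 1 / 2 := by
  have hswap := (Complex.nonneg_iff.mp hsep.trace_swapMat_mul_nonneg).1
  rw [trace_antiProj_mul, hσ.2]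
  simp only [Complex.div_ofNat_re, Complex.sub_re, Complex.one_re]
  linarith

theorem log_two_le_neg_log {t : ℝ} (ht : 0 < t) (ht2 : t ≤ 1 / 2) :
    Real.log 2 ≤ -Real.log t := by
  rw [← Real.log_inv]
  exact Real.log_le_log two_pos (by rw [le_inv_comm₀ two_pos ht]; linarith)

theorem two_mul_log_add_two_div_lt_log_two {x : ℝ} (hx : 5 ≤ x) :
    2 * Real.log ((x + 2) / x) < Real.log 2 := by
  have hsq : ((x + 2) / x) ^ 2 < 2 := by
    rw [div_pow, div_lt_iff₀ (by positivity)]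
    nlinarith
  have := Real.log_lt_log (by positivity) hsq
  rwa [Real.log_pow, Nat.cast_ofNat] at this

theorem log_add_three_div_sub_one_lt_log_two {x : ℝ} (hx : 5 < x) :
    Real.log ((x + 3) / (x - 1)) < Real.log 2 := by
  refine Real.log_lt_log (div_pos (by linarith) (by linarith)) ?_
  rw [div_lt_iff₀ (by linarith)]
  linarith

/-- For `d ≥ 27` and any separable density matrix `σ` on `ℂ^d ⊗ ℂ^d` with positive
overlap `t = Re Tr(P·σ)`, the 0-relative entropy `−log t` of the totally antisymmetric
state relative to `σ` strictly exceeds the quantum conditional mutual information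
`I(A:B|C)` of `ρ_{ABC} = P_k/d_k` (`k = ⌈(d+1)/2⌉`): namely `2·log((d+2)/d)` for `d`
even and `log((d+3)/(d−1))` for `d` odd. -/
theorem zero_relative_entropy_gt_cmi (d : ℕ) (hd : 27 ≤ d)
    (σ : Matrix (Fin d × Fin d) (Fin d × Fin d) ℂ)
    (hσ : IsDensityMatrix σ) (hsep : IsSeparableState σ)
    (t : ℝ) (ht : t = ((antiProj d * σ).trace).re) (htpos : 0 < t) :
    (Even d → -Real.log t > 2 * Real.log (((d : ℝ) + 2) / (d : ℝ))) ∧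
    (Odd d → -Real.log t > Real.log (((d : ℝ) + 3) / ((d : ℝ) - 1))) := by
  have hlog : Real.log 2 ≤ -Real.log t :=
    log_two_le_neg_log htpos (ht ▸ hsep.re_trace_antiProj_mul_le_half hσ)
  have hdr : (27 : ℝ) ≤ d := by exact_mod_cast hd
  exact ⟨fun _ => (two_mul_log_add_two_div_lt_log_two (by linarith)).trans_le hlog,
    fun _ => (log_add_three_div_sub_one_lt_log_two (by linarith)).trans_le hlog⟩
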